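/- arXiv:2505.20238 — 3 statements merged into one kernel-verified Lean document; each statement's English description precedes it below -/
import Mathlib

section
/- Let K ⊆ P ⊆ L be finite extensions inside K̄. Then t_K(P) divides t_K(L), and t_K(L) divides t_P(L) · [P : K]. -/
open IntermediateField Polynomial
open scoped Classical

/-- The Galois closure of `L/K` inside the ambient field `Kbar`. -/
noncomputable def galClosure (K : Type*) {Kbar : Type*} [Field K] [Field Kbar] [Algebra K Kbar]
    (L : IntermediateField K Kbar) : IntermediateField K Kbar :=
  normalClosure K L Kbar

/-- `H = Gal(L̃/L)` as a subgroup of `G = Gal(L̃/K)`. -/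
noncomputable def fixSub (K : Type*) {Kbar : Type*} [Field K] [Field Kbar] [Algebra K Kbar]
    (L : IntermediateField K Kbar) :
    Subgroup (↥(galClosure K L) ≃ₐ[K] ↥(galClosure K L)) :=
  (IntermediateField.comap (galClosure K L).val L).fixingSubgroup

/-- The normal closure `H^G` of `H = Gal(L̃/L)` in `G = Gal(L̃/K)`. -/
noncomputable def fixSubCl (K : Type*) {Kbar : Type*} [Field K] [Field Kbar] [Algebra K Kbar]
    (L : IntermediateField K Kbar) :
    Subgroup (↥(galClosure K L) ≃ₐ[K] ↥(galClosure K L)) :=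
  Subgroup.normalClosure
    ((fixSub K L : Subgroup (↥(galClosure K L) ≃ₐ[K] ↥(galClosure K L))) :
      Set (↥(galClosure K L) ≃ₐ[K] ↥(galClosure K L)))

/-- Cluster size `r_K(L) = [N_G(H) : H]`. -/
noncomputable def clusterSize (K : Type*) {Kbar : Type*} [Field K] [Field Kbar] [Algebra K Kbar]
    (L : IntermediateField K Kbar) : ℕ :=
  (fixSub K L).relIndex (Subgroup.normalizer (fixSub K L : Set (↥(galClosure K L) ≃ₐ[K] ↥(galClosure K L))))

/-- Number of clusters `s_K(L) = [G : N_G(H)]`. -/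
noncomputable def numClusters (K : Type*) {Kbar : Type*} [Field K] [Field Kbar] [Algebra K Kbar]
    (L : IntermediateField K Kbar) : ℕ :=
  (Subgroup.normalizer (fixSub K L : Set (↥(galClosure K L) ≃ₐ[K] ↥(galClosure K L)))).index

/-- Ascending index `t_K(L) = [G : H^G]`. -/
noncomputable def ascIndex (K : Type*) {Kbar : Type*} [Field K] [Field Kbar] [Algebra K Kbar]
    (L : IntermediateField K Kbar) : ℕ :=
  (fixSubCl K L).index

/-- Root capacity `ρ_K(M, L)`: the number of roots lying in `M` of the minimal polynomial
over `K` of a primitive element of `L`. -/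
noncomputable def rootCapacity (K : Type*) {Kbar : Type*} [Field K] [Field Kbar] [Algebra K Kbar]
    (M L : IntermediateField K Kbar) : ℕ :=
  ((minpoly K (Classical.epsilon (fun α : Kbar => K⟮α⟯ = L))).rootSet Kbar ∩ (M : Set Kbar)).ncard

/-- Intersection indicium `τ_K(M, L)`: the degree over `K` of the intersection of all
subfields of `M` that are `K`-isomorphic to `L`, or `0` if there are none. -/
noncomputable def interIndicium (K : Type*) {Kbar : Type*} [Field K] [Field Kbar] [Algebra K Kbar]
    (M L : IntermediateField K Kbar) : ℕ :=
  if {L' : IntermediateField K Kbar | L' ≤ M ∧ Nonempty (↥L' ≃ₐ[K] ↥L)}.Nonempty then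
    Module.finrank K ↥(sInf {L' : IntermediateField K Kbar | L' ≤ M ∧ Nonempty (↥L' ≃ₐ[K] ↥L)})
  else 0

/-- `B` is a minimal generating set of the Galois closure of `L/K`: a set of subfields of
`K̄` that are `K`-isomorphic to `L`, whose compositum is `L̃`, and such that no proper subset
has compositum `L̃`. -/
def IsMinGenSet (K : Type*) {Kbar : Type*} [Field K] [Field Kbar] [Algebra K Kbar]
    (L : IntermediateField K Kbar) (B : Set (IntermediateField K Kbar)) : Prop :=
  (∀ L' ∈ B, Nonempty (↥L' ≃ₐ[K] ↥L)) ∧ sSup B = galClosure K L ∧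
    ∀ A : Set (IntermediateField K Kbar), A ⊂ B → sSup A ≠ galClosure K L

section Aux

open IntermediateField

/-- Degrees of nested intermediate fields divide each other. -/
lemma aux_finrank_dvd_of_le {F E : Type*} [Field F] [Field E] [Algebra F E]
    {A B : IntermediateField F E} (h : A ≤ B) :
    Module.finrank F ↥A ∣ Module.finrank F ↥B :=
  ⟨A.relfinrank B, by
    rw [← relfinrank_bot_left (F := F) A, ← relfinrank_bot_left (F := F) B,
      relfinrank_mul_relfinrank bot_le h]⟩

/-- The key structural lemma: the ascending index of `L/K` is the degree of the (unique)
maximal subextension of `L/K` that is normal over `K`. -/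
lemma exists_maxGal {K Kbar : Type*} [Field K] [PerfectField K] [Field Kbar] [Algebra K Kbar]
    [IsAlgClosure K Kbar] (L : IntermediateField K Kbar) [FiniteDimensional K ↥L] :
    ∃ F : IntermediateField K Kbar, F ≤ L ∧ Normal K ↥F ∧
      (∀ E : IntermediateField K Kbar, E ≤ L → Normal K ↥E → E ≤ F) ∧
      Module.finrank K ↥F = ascIndex K L := by
  set M := galClosure K L with hM
  haveI : FiniteDimensional K ↥M := normalClosure.is_finiteDimensional K ↥L Kbar
  haveI : Normal K ↥M := normalClosure.normal K ↥L Kbar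
  haveI : IsGalois K ↥M := ⟨⟩
  set L' : IntermediateField K ↥M := IntermediateField.comap M.val L with hL'
  have hLM : L ≤ M := le_normalClosure L
  have hmapL' : L'.map M.val = L := by
    rw [map_comap_eq_self]; rwa [fieldRange_val]
  set H := L'.fixingSubgroup with hH
  set N := Subgroup.normalClosure (H : Set (↥M ≃ₐ[K] ↥M)) with hN
  haveI : N.Normal := Subgroup.normalClosure_normal
  set F' := IntermediateField.fixedField N with hF'
  haveI : IsGalois K ↥F' := IsGalois.of_fixedField_normal_subgroup N
  have hF'L' : F' ≤ L' := by
    have h1 : F' ≤ IntermediateField.fixedField H := by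
      intro x hx g
      exact hx ⟨g.1, Subgroup.subset_normalClosure g.2⟩
    rwa [IsGalois.fixedField_fixingSubgroup L'] at h1
  refine ⟨F'.map M.val, ?_, ?_, ?_, ?_⟩
  · exact (map_mono M.val hF'L').trans_eq hmapL'
  · exact Normal.of_algEquiv (equivMap F' M.val)
  · intro E hEL hEN
    set E' := IntermediateField.comap M.val E with hE'
    have hmapE' : E'.map M.val = E := by
      rw [map_comap_eq_self]; rw [fieldRange_val]; exact hEL.trans hLM
    haveI : Normal K ↥E' :=
      Normal.of_algEquiv ((equivMap E' M.val).trans (equivOfEq hmapE')).symm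
    haveI : IsGalois K ↥E' := ⟨⟩
    haveI : E'.fixingSubgroup.Normal := IsGalois.fixingSubgroup_normal_of_isGalois E'
    have hE'L' : E' ≤ L' := fun x hx => hEL hx
    have hHE : H ≤ E'.fixingSubgroup := fun g hg =>
      (E'.mem_fixingSubgroup_iff g).mpr fun y hy =>
        (L'.mem_fixingSubgroup_iff g).mp hg y (hE'L' hy)
    have hNE : N ≤ E'.fixingSubgroup := Subgroup.normalClosure_le_normal hHE
    have hE'F' : E' ≤ F' := (IntermediateField.le_iff_le N E').mpr hNE
    calc E = E'.map M.val := hmapE'.symm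
      _ ≤ F'.map M.val := map_mono M.val hE'F'
  · have h1 : Module.finrank K ↥(F'.map M.val) = Module.finrank K ↥F' :=
      ((equivMap F' M.val).symm.toLinearEquiv.finrank_eq)
    have h2 : ascIndex K L = N.index := rfl
    have h3 : N.index = Nat.card ((↥M ≃ₐ[K] ↥M) ⧸ N) := rfl
    rw [h1, h2, h3, Nat.card_congr (IsGalois.normalAutEquivQuotient N).toEquiv,
      IsGalois.card_aut_eq_finrank]

end Aux

/-- For `K ⊆ P ⊆ L`, `t_K(P)` divides `t_K(L)` and `t_K(L)` divides
`t_P(L) · [P : K]`. -/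
theorem statement2 {K Kbar : Type*} [Field K] [PerfectField K] [Field Kbar] [Algebra K Kbar]
    [IsAlgClosure K Kbar] (P L : IntermediateField K Kbar) [FiniteDimensional K ↥L]
    (hPL : P ≤ L) :
    ascIndex K P ∣ ascIndex K L ∧
      ascIndex K L ∣ ascIndex ↥P (IntermediateField.extendScalars hPL) * Module.finrank K ↥P := by
  haveI : FiniteDimensional K ↥P :=
    FiniteDimensional.of_injective (IntermediateField.inclusion hPL).toLinearMap
      (fun _ _ h => (IntermediateField.inclusion hPL).toRingHom.injective h)
  haveI : Algebra.IsAlgebraic K ↥P := Algebra.IsAlgebraic.of_finite K ↥P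
  haveI : PerfectField ↥P := Algebra.IsAlgebraic.perfectField (K := K)
  haveI : Algebra.IsAlgebraic ↥P Kbar := Algebra.IsAlgebraic.tower_top (K := K) ↥P
  haveI : IsAlgClosure ↥P Kbar := ⟨IsAlgClosure.isAlgClosed K, inferInstance⟩
  haveI : FiniteDimensional ↥P ↥(IntermediateField.extendScalars hPL) := by
    haveI : FiniteDimensional K ↥(IntermediateField.extendScalars hPL) :=
      (inferInstance : FiniteDimensional K ↥L)
    exact FiniteDimensional.right K ↥P ↥(IntermediateField.extendScalars hPL)
  obtain ⟨FL, hFL_le, hFL_norm, hFL_max, hFL_rank⟩ := exists_maxGal L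
  obtain ⟨FP, hFP_le, hFP_norm, hFP_max, hFP_rank⟩ := exists_maxGal P
  obtain ⟨F', hF'_le, hF'_norm, hF'_max, hF'_rank⟩ :=
    exists_maxGal (K := ↥P) (IntermediateField.extendScalars hPL)
  constructor
  · rw [← hFP_rank, ← hFL_rank]
    exact aux_finrank_dvd_of_le (hFL_max FP (hFP_le.trans hPL) hFP_norm)
  · set X : IntermediateField K Kbar := P ⊔ FL with hX
    have hPX : P ≤ X := le_sup_left
    have hXL : X ≤ L := sup_le hPL hFL_le
    have hXnorm : Normal ↥P ↥(IntermediateField.extendScalars hPX) := by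
      rw [normal_iff_forall_map_le']
      intro σ x hx
      obtain ⟨y, hy, rfl⟩ := hx
      have hyX : y ∈ X := hy
      have key : X.map ((σ.restrictScalars K : Kbar ≃ₐ[K] Kbar) : Kbar →ₐ[K] Kbar) ≤ X := by
        rw [hX, IntermediateField.map_sup]
        refine sup_le (le_trans ?_ le_sup_left) (le_trans ?_ le_sup_right)
        · rintro _ ⟨p, hp, rfl⟩
          have h : σ p = p := σ.commutes ⟨p, hp⟩
          exact show σ p ∈ P by rw [h]; exact hp
        · exact normal_iff_forall_map_le'.mp hFL_norm (σ.restrictScalars K)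
      exact key ⟨y, hyX, rfl⟩
    have hXF' : IntermediateField.extendScalars hPX ≤ F' :=
      hF'_max _ ((extendScalars_le_extendScalars_iff hPX hPL).mpr hXL) hXnorm
    have tower : Module.finrank K ↥X =
        Module.finrank K ↥P * Module.finrank ↥P ↥(IntermediateField.extendScalars hPX) := by
      rw [← relfinrank_bot_left (F := K) X, ← relfinrank_bot_left (F := K) P,
        ← relfinrank_eq_finrank_of_le hPX, relfinrank_mul_relfinrank bot_le hPX]
    have d1 : ascIndex K L ∣ Module.finrank K ↥X := by
      rw [← hFL_rank]
      exact aux_finrank_dvd_of_le (le_sup_right : FL ≤ X)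
    have d2 : Module.finrank ↥P ↥(IntermediateField.extendScalars hPX) ∣
        ascIndex ↥P (IntermediateField.extendScalars hPL) := by
      rw [← hF'_rank]
      exact aux_finrank_dvd_of_le hXF'
    calc ascIndex K L ∣ Module.finrank K ↥X := d1
      _ = Module.finrank K ↥P * Module.finrank ↥P ↥(IntermediateField.extendScalars hPX) := tower
      _ ∣ Module.finrank K ↥P * ascIndex ↥P (IntermediateField.extendScalars hPL) :=
          mul_dvd_mul_left _ d2
      _ = ascIndex ↥P (IntermediateField.extendScalars hPL) * Module.finrank K ↥P :=
          mul_comm _ _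
end

section
/- Let K ⊆ L ⊆ M be finite extensions inside K̄ with [L : K] > 2, and let F/K be a finite Galois extension with M̃ ∩ F = K, where M̃ is the Galois closure of M/K (so M' = MF is obtained by strong cluster magnification from M/K and L' = LF is obtained by strong cluster magnification from L/K, both through F/K), and set d = [F : K]. Then ρ_K(M', L') = d · ρ_K(M, L). -/
open IntermediateField Polynomial
open scoped Classical

section ClusterHelpers

variable {K Kbar : Type*} [Field K] [Field Kbar] [Algebra K Kbar]

/-- Any `K`-algebra hom from an intermediate field into `Kbar` extends to an automorphism
of `Kbar`, provided `Kbar/K` is normal. -/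
theorem exists_aut_extend [Normal K Kbar] (N : IntermediateField K Kbar)
    (τ : ↥N →ₐ[K] Kbar) : ∃ t : Kbar ≃ₐ[K] Kbar, ∀ x : ↥N, t ↑x = τ x := by
  refine ⟨AlgEquiv.ofBijective (τ.liftNormal Kbar) (AlgHom.normal_bijective K Kbar Kbar _), ?_⟩
  intro x
  have h := τ.liftNormal_commutes Kbar x
  simpa using h

variable [PerfectField K] [IsAlgClosure K Kbar]

/-- An element of `Kbar` fixed by every automorphism fixing `N` pointwise lies in `N`. -/
theorem mem_of_fixed {N : IntermediateField K Kbar} {x : Kbar}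
    (h : ∀ c : Kbar ≃ₐ[K] Kbar, (∀ y ∈ N, c y = y) → c x = x) : x ∈ N := by
  haveI : IsAlgClosed Kbar := IsAlgClosure.isAlgClosed K
  haveI : Algebra.IsAlgebraic ↥N Kbar := Algebra.IsAlgebraic.tower_top (K := K) ↥N
  haveI : IsAlgClosure ↥N Kbar := ⟨inferInstance, inferInstance⟩
  by_contra hx
  have hint : IsIntegral ↥N x := (Algebra.IsAlgebraic.isAlgebraic x).isIntegral
  haveI : Algebra.IsSeparable ↥N Kbar := Algebra.isSeparable_tower_top_of_isSeparable K ↥N Kbar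
  have hsep : (minpoly ↥N x).Separable := Algebra.IsSeparable.isSeparable ↥N x
  have hsplits : ((minpoly ↥N x).map (algebraMap ↥N Kbar)).Splits := IsAlgClosed.splits _
  have hcard : Fintype.card ((minpoly ↥N x).rootSet Kbar) = (minpoly ↥N x).natDegree :=
    Polynomial.card_rootSet_eq_natDegree hsep hsplits
  have h1 : (minpoly ↥N x).natDegree ≠ 1 := by
    intro h1
    apply hx
    obtain ⟨y, hy⟩ := minpoly.natDegree_eq_one_iff.mp h1
    rw [← hy]
    exact y.2
  have hpos := minpoly.natDegree_pos hint
  have hx_root : x ∈ (minpoly ↥N x).rootSet Kbar := by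
    rw [Polynomial.mem_rootSet]
    exact ⟨minpoly.ne_zero hint, minpoly.aeval _ _⟩
  have h2 : 1 < Fintype.card ((minpoly ↥N x).rootSet Kbar) := by omega
  obtain ⟨y, hy⟩ := Fintype.exists_ne_of_one_lt_card h2 ⟨x, hx_root⟩
  have hy_ev : Polynomial.aeval (y : Kbar) (minpoly ↥N x) = 0 :=
    (Polynomial.mem_rootSet.mp y.2).2
  obtain ⟨σ, hσ⟩ :=
    minpoly.exists_algEquiv_of_root' (Algebra.IsAlgebraic.isAlgebraic (R := ↥N) x) hy_ev
  have hfix : (σ.restrictScalars K) x = x := by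
    apply h
    intro z hz
    have hc := σ.commutes ⟨z, hz⟩
    simpa using hc
  have : (σ.restrictScalars K) x = σ x := rfl
  rw [this, hσ] at hfix
  exact hy (Subtype.ext hfix)

/-- If `N ⊓ E = ⊥` with `E/K` finite Galois (normal), then any automorphism of `E`
extends to an automorphism of `Kbar` fixing `N` pointwise. -/
theorem exists_fixing_extension (N E : IntermediateField K Kbar)
    [FiniteDimensional K ↥E] [Normal K ↥E] (hNE : N ⊓ E = ⊥) (ψ : ↥E ≃ₐ[K] ↥E) :
    ∃ c : Kbar ≃ₐ[K] Kbar, (∀ y ∈ N, c y = y) ∧ ∀ x : ↥E, c ↑x = ↑(ψ x) := by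
  let I : Subgroup (↥E ≃ₐ[K] ↥E) := N.fixingSubgroup.map (AlgEquiv.restrictNormalHom ↥E)
  have hfixI : fixedField I = ⊥ := by
    refine le_antisymm ?_ bot_le
    intro z hz
    have hzN : (z : Kbar) ∈ N := by
      apply mem_of_fixed
      intro c hc
      have hmem : c ∈ N.fixingSubgroup := (N.mem_fixingSubgroup_iff c).mpr hc
      have hzI : AlgEquiv.restrictNormalHom ↥E c z = z := hz ⟨_, ⟨c, hmem, rfl⟩⟩
      calc c ↑z = ↑(AlgEquiv.restrictNormalHom ↥E c z) :=
            (AlgEquiv.restrictNormal_commutes c ↥E z).symm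
        _ = ↑z := by rw [hzI]
    have hzbot : (z : Kbar) ∈ (⊥ : IntermediateField K Kbar) := by
      rw [← hNE]; exact ⟨hzN, z.2⟩
    rw [IntermediateField.mem_bot] at hzbot
    obtain ⟨k, hk⟩ := hzbot
    rw [IntermediateField.mem_bot]
    refine ⟨k, ?_⟩
    apply Subtype.val_injective
    rw [← hk]
    rfl
  have hI : I = ⊤ := by
    have hartin := IntermediateField.fixingSubgroup_fixedField I
    rw [hfixI] at hartin
    rw [← hartin]
    ext g
    simp only [Subgroup.mem_top, iff_true]
    rw [IntermediateField.mem_fixingSubgroup_iff]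
    intro y hy
    rw [IntermediateField.mem_bot] at hy
    obtain ⟨k, hk⟩ := hy
    rw [← hk]
    exact g.commutes k
  have hψ : ψ ∈ I := hI ▸ Subgroup.mem_top ψ
  obtain ⟨c, hc, hcψ⟩ := hψ
  refine ⟨c, (N.mem_fixingSubgroup_iff c).mp hc, fun x => ?_⟩
  rw [← hcψ]
  exact (AlgEquiv.restrictNormal_commutes c ↥E x).symm

/-- The key field computation: if `M̃ ⊓ F = ⊥` then `(M ⊔ F) ⊓ M̃ = M`. -/
theorem sup_inf_galClosure (M F : IntermediateField K Kbar)
    [FiniteDimensional K ↥M] [FiniteDimensional K ↥F]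
    (hdisj : galClosure K M ⊓ F = ⊥) : (M ⊔ F) ⊓ galClosure K M = M := by
  haveI : Normal K Kbar := IsAlgClosure.normal K Kbar
  haveI : Normal K ↥(galClosure K M) := inferInstanceAs (Normal K ↥(normalClosure K ↥M Kbar))
  haveI : FiniteDimensional K ↥(galClosure K M) :=
    inferInstanceAs (FiniteDimensional K ↥(normalClosure K ↥M Kbar))
  refine le_antisymm ?_ (le_inf le_sup_left (IntermediateField.le_normalClosure M))
  rintro x ⟨hxMF, hxMt⟩
  apply mem_of_fixed
  intro c hc
  set g := AlgEquiv.restrictNormalHom ↥(galClosure K M) c with hg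
  obtain ⟨c', hc'F, hc'g⟩ :=
    exists_fixing_extension F (galClosure K M) (by rwa [inf_comm]) g
  have hc'M : ∀ y ∈ M, c' y = y := by
    intro y hy
    have h1 : c' y = ↑(g ⟨y, IntermediateField.le_normalClosure M hy⟩) :=
      hc'g ⟨y, IntermediateField.le_normalClosure M hy⟩
    have h2 : (↑(g ⟨y, IntermediateField.le_normalClosure M hy⟩) : Kbar) = c y :=
      AlgEquiv.restrictNormal_commutes c ↥(galClosure K M) _
    rw [h1, h2]
    exact hc y hy
  have hM : M ≤ IntermediateField.fixedField (Subgroup.zpowers c') := by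
    rw [IntermediateField.le_iff_le]
    rw [Subgroup.zpowers_le]
    exact (IntermediateField.mem_fixingSubgroup_iff M c').mpr hc'M
  have hF : F ≤ IntermediateField.fixedField (Subgroup.zpowers c') := by
    rw [IntermediateField.le_iff_le]
    rw [Subgroup.zpowers_le]
    exact (IntermediateField.mem_fixingSubgroup_iff F c').mpr hc'F
  have hfixc' : c' x = x := (sup_le hM hF) hxMF ⟨c', Subgroup.mem_zpowers c'⟩
  have h1 : c x = ↑(g ⟨x, hxMt⟩) :=
    (AlgEquiv.restrictNormal_commutes c ↥(galClosure K M) ⟨x, hxMt⟩).symm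
  have h2 : (↑(g ⟨x, hxMt⟩) : Kbar) = c' x := (hc'g ⟨x, hxMt⟩).symm
  rw [h1, h2, hfixc']

end ClusterHelpers

section ClusterHelpers2

variable {K Kbar : Type*} [Field K] [Field Kbar] [Algebra K Kbar]

/-- Two algebra homs on a compositum agreeing on both factors are equal. -/
theorem algHom_ext_of_sup {L F : IntermediateField K Kbar} [FiniteDimensional K ↥L]
    (f g : ↥(L ⊔ F) →ₐ[K] Kbar)
    (hL : ∀ x : ↥L, f (IntermediateField.inclusion le_sup_left x) =
      g (IntermediateField.inclusion le_sup_left x))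
    (hF : ∀ x : ↥F, f (IntermediateField.inclusion le_sup_right x) =
      g (IntermediateField.inclusion le_sup_right x)) : f = g := by
  have hsub : (L ⊔ F).toSubalgebra = L.toSubalgebra ⊔ F.toSubalgebra :=
    IntermediateField.sup_toSubalgebra_of_left L F
  apply AlgHom.ext
  intro x
  have hx : (x : Kbar) ∈ L.toSubalgebra ⊔ F.toSubalgebra := by
    rw [← hsub]; exact x.2
  have hmem : (x : Kbar) ∈ (AlgHom.equalizer f g).map (L ⊔ F).val := by
    refine (sup_le ?_ ?_ : L.toSubalgebra ⊔ F.toSubalgebra ≤ _) hx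
    · intro y hy
      have hyL : y ∈ L := hy
      exact ⟨⟨y, (le_sup_left : L ≤ L ⊔ F) hyL⟩, hL ⟨y, hyL⟩, rfl⟩
    · intro y hy
      have hyF : y ∈ F := hy
      exact ⟨⟨y, (le_sup_right : F ≤ L ⊔ F) hyF⟩, hF ⟨y, hyF⟩, rfl⟩
  obtain ⟨z, hz, hzx⟩ := hmem
  have hz' : z = x := Subtype.ext hzx
  rw [← hz']
  exact hz

variable [PerfectField K] [IsAlgClosure K Kbar]

/-- Root capacity counts embeddings with range in `M`. -/
theorem rootCapacity_eq (M L : IntermediateField K Kbar) [FiniteDimensional K ↥L] :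
    rootCapacity K M L = Nat.card {σ : ↥L →ₐ[K] Kbar // σ.fieldRange ≤ M} := by
  have hex : ∃ α : Kbar, K⟮α⟯ = L := by
    obtain ⟨a, ha⟩ := Field.exists_primitive_element K ↥L
    refine ⟨a, ?_⟩
    calc K⟮(a : Kbar)⟯ = IntermediateField.map L.val K⟮a⟯ := by
          rw [IntermediateField.adjoin_map, Set.image_singleton]; rfl
      _ = IntermediateField.map L.val ⊤ := by rw [ha]
      _ = L := by rw [← AlgHom.fieldRange_eq_map, IntermediateField.fieldRange_val]
  have hα := Classical.epsilon_spec hex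
  unfold rootCapacity
  revert hα
  generalize Classical.epsilon (fun α : Kbar => K⟮α⟯ = L) = α
  intro hα
  subst hα
  haveI : Algebra.IsAlgebraic K Kbar := IsAlgClosure.isAlgebraic
  have hint : IsIntegral K α := (Algebra.IsAlgebraic.isAlgebraic α).isIntegral
  have hne : minpoly K α ≠ 0 := minpoly.ne_zero hint
  set pb := IntermediateField.adjoin.powerBasis hint with hpb
  have hgen : pb.gen = AdjoinSimple.gen K α := rfl
  have hming : minpoly K pb.gen = minpoly K α := by
    rw [hgen, IntermediateField.minpoly_gen]
  have haev : ∀ (m : Kbar), m ∈ M → ∀ p : K[X], Polynomial.aeval m p ∈ M := by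
    intro m hm p
    have h := Polynomial.aeval_algHom_apply M.val (⟨m, hm⟩ : ↥M) p
    rw [show (M.val) ⟨m, hm⟩ = m from rfl] at h
    rw [h]
    exact (Polynomial.aeval (⟨m, hm⟩ : ↥M) p).2
  have hrange : ∀ σ : ↥K⟮α⟯ →ₐ[K] Kbar, σ pb.gen ∈ M → σ.fieldRange ≤ M := by
    intro σ hσ w hw
    obtain ⟨z, rfl⟩ := hw
    show σ z ∈ M
    obtain ⟨p, hp⟩ := pb.exists_eq_aeval' z
    rw [hp, ← Polynomial.aeval_algHom_apply]
    exact haev _ hσ p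
  let e : {σ : ↥K⟮α⟯ →ₐ[K] Kbar // σ.fieldRange ≤ M} ≃
      (((minpoly K α).rootSet Kbar ∩ (M : Set Kbar) : Set Kbar)) :=
    { toFun := fun σ => ⟨σ.1 pb.gen, by
        constructor
        · rw [Polynomial.mem_rootSet]
          refine ⟨hne, ?_⟩
          rw [← hming, Polynomial.aeval_algHom_apply, minpoly.aeval, map_zero]
        · exact σ.2 ⟨pb.gen, rfl⟩⟩
      invFun := fun β => ⟨pb.lift β.1 (by rw [hming]; exact (Polynomial.mem_rootSet.mp β.2.1).2),
        hrange _ (by rw [pb.lift_gen]; exact β.2.2)⟩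
      left_inv := fun σ => by
        apply Subtype.ext
        apply pb.algHom_ext
        simp only [PowerBasis.lift_gen]
      right_inv := fun β => by
        apply Subtype.ext
        simp only [PowerBasis.lift_gen] }
  rw [← Nat.card_coe_set_eq]
  exact (Nat.card_congr e).symm

/-- Extension of a pair of embeddings to the compositum. -/
theorem exists_hom_extension (L M F : IntermediateField K Kbar)
    [FiniteDimensional K ↥M] [FiniteDimensional K ↥F] [Normal K ↥F]
    (hdisj : galClosure K M ⊓ F = ⊥) (hLM : L ≤ M)
    (τ : ↥L →ₐ[K] Kbar) (hτ : τ.fieldRange ≤ M) (φ : ↥F →ₐ[K] Kbar) :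
    ∃ σ : ↥(L ⊔ F) →ₐ[K] Kbar, σ.fieldRange ≤ M ⊔ F ∧
      (∀ x : ↥L, σ (IntermediateField.inclusion le_sup_left x) = τ x) ∧
      (∀ x : ↥F, σ (IntermediateField.inclusion le_sup_right x) = φ x) := by
  haveI : Normal K Kbar := IsAlgClosure.normal K Kbar
  obtain ⟨t, ht⟩ := exists_aut_extend L τ
  obtain ⟨u, hu⟩ := exists_aut_extend F φ
  set ψ0 := AlgEquiv.restrictNormalHom ↥F t with hψ0
  set ψ1 := AlgEquiv.restrictNormalHom ↥F u with hψ1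
  obtain ⟨c, hcMt, hcF⟩ := exists_fixing_extension (galClosure K M) F hdisj (ψ0⁻¹ * ψ1)
  set gf : Kbar ≃ₐ[K] Kbar := t * c with hgf
  have hgL : ∀ x : ↥L, gf ↑x = τ x := by
    intro x
    have hcfix : c ↑x = ↑x :=
      hcMt ↑x (IntermediateField.le_normalClosure M (hLM x.2))
    show t (c ↑x) = τ x
    rw [hcfix, ht]
  have ht_psi : ∀ y : ↥F, t ↑y = ↑(ψ0 y) := fun y =>
    (AlgEquiv.restrictNormal_commutes t ↥F y).symm
  have hu_psi : ∀ y : ↥F, u ↑y = ↑(ψ1 y) := fun y =>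
    (AlgEquiv.restrictNormal_commutes u ↥F y).symm
  have hgF : ∀ x : ↥F, gf ↑x = φ x := by
    intro x
    show t (c ↑x) = φ x
    rw [hcF x, ht_psi]
    have hcomp : ψ0 ((ψ0⁻¹ * ψ1) x) = ψ1 x := by
      show ψ0 (ψ0⁻¹ (ψ1 x)) = ψ1 x
      exact ψ0.apply_symm_apply (ψ1 x)
    rw [hcomp, ← hu_psi, hu]
  refine ⟨gf.toAlgHom.comp (L ⊔ F).val, ?_, ?_, ?_⟩
  · rintro _ ⟨x, rfl⟩
    have hsup : L ⊔ F ≤ (M ⊔ F).comap gf.toAlgHom := by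
      apply sup_le
      · intro y hy
        have : gf y = τ ⟨y, hy⟩ := hgL ⟨y, hy⟩
        show gf y ∈ M ⊔ F
        rw [this]
        exact (le_sup_left : M ≤ M ⊔ F) (hτ ⟨⟨y, hy⟩, rfl⟩)
      · intro y hy
        have h1 : gf y = φ ⟨y, hy⟩ := hgF ⟨y, hy⟩
        have h2 : φ ⟨y, hy⟩ = ↑(ψ1 ⟨y, hy⟩) := by rw [← hu, hu_psi]
        show gf y ∈ M ⊔ F
        rw [h1, h2]
        exact (le_sup_right : F ≤ M ⊔ F) (ψ1 ⟨y, hy⟩).2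
    exact hsup x.2
  · intro x
    exact hgL x
  · intro x
    exact hgF x

end ClusterHelpers2

/-- Root Capacity Magnification: if `K ⊆ L ⊆ M`, `[L:K] > 2`, `F/K` finite Galois
with `M̃ ∩ F = K`, `d = [F:K]`, then `ρ_K(MF, LF) = d · ρ_K(M, L)`. -/
theorem statement3 {K Kbar : Type*} [Field K] [PerfectField K] [Field Kbar] [Algebra K Kbar]
    [IsAlgClosure K Kbar] (L M F : IntermediateField K Kbar)
    [FiniteDimensional K ↥M] [FiniteDimensional K ↥F] [IsGalois K ↥F]
    (hLM : L ≤ M) (hL : 2 < Module.finrank K ↥L)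
    (hdisj : galClosure K M ⊓ F = ⊥) :
    rootCapacity K (M ⊔ F) (L ⊔ F) = Module.finrank K ↥F * rootCapacity K M L := by
  haveI : IsAlgClosed Kbar := IsAlgClosure.isAlgClosed K
  haveI : Normal K Kbar := IsAlgClosure.normal K Kbar
  haveI hLfin : FiniteDimensional K ↥L := by
    haveI : FiniteDimensional K M.toSubmodule := inferInstanceAs (FiniteDimensional K ↥M)
    have h := Submodule.finiteDimensional_of_le (S₁ := L.toSubmodule) (S₂ := M.toSubmodule)
      (fun x hx => hLM hx)
    exact h
  haveI : FiniteDimensional K ↥(L ⊔ F) := IntermediateField.finiteDimensional_sup L F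
  haveI : FiniteDimensional K ↥(M ⊔ F) := IntermediateField.finiteDimensional_sup M F
  rw [rootCapacity_eq (M ⊔ F) (L ⊔ F), rootCapacity_eq M L]
  have hExt := fun (p : (↥F →ₐ[K] Kbar) × {τ : ↥L →ₐ[K] Kbar // τ.fieldRange ≤ M}) =>
    exists_hom_extension L M F hdisj hLM p.2.1 p.2.2 p.1
  let ext : (↥F →ₐ[K] Kbar) × {τ : ↥L →ₐ[K] Kbar // τ.fieldRange ≤ M} →
      {σ : ↥(L ⊔ F) →ₐ[K] Kbar // σ.fieldRange ≤ M ⊔ F} :=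
    fun p => ⟨(hExt p).choose, (hExt p).choose_spec.1⟩
  have hbij : Function.Bijective ext := by
    constructor
    · intro p q hpq
      have hp := (hExt p).choose_spec
      have hq := (hExt q).choose_spec
      have hval : (hExt p).choose = (hExt q).choose := congrArg Subtype.val hpq
      have hφ : p.1 = q.1 := by
        apply AlgHom.ext
        intro x
        rw [← hp.2.2 x, ← hq.2.2 x, hval]
      have hτ : p.2 = q.2 := by
        apply Subtype.ext
        apply AlgHom.ext
        intro x
        rw [← hp.2.1 x, ← hq.2.1 x, hval]
      exact Prod.ext hφ hτ
    · intro σ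
      have hτrange : (σ.1.comp (IntermediateField.inclusion le_sup_left)).fieldRange ≤ M := by
        have hsub : (σ.1.comp (IntermediateField.inclusion le_sup_left)).fieldRange ≤
            (M ⊔ F) ⊓ galClosure K M := by
          apply le_inf
          · rintro _ ⟨x, rfl⟩
            exact σ.2 ⟨_, rfl⟩
          · calc (σ.1.comp (IntermediateField.inclusion le_sup_left)).fieldRange ≤
                galClosure K L := AlgHom.fieldRange_le_normalClosure _
              _ ≤ galClosure K M := IntermediateField.normalClosure_mono L M hLM
        rw [sup_inf_galClosure M F hdisj] at hsub
        exact hsub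
      refine ⟨⟨σ.1.comp (IntermediateField.inclusion le_sup_right),
        ⟨σ.1.comp (IntermediateField.inclusion le_sup_left), hτrange⟩⟩, ?_⟩
      apply Subtype.ext
      set p : (↥F →ₐ[K] Kbar) × {τ : ↥L →ₐ[K] Kbar // τ.fieldRange ≤ M} :=
        ⟨σ.1.comp (IntermediateField.inclusion le_sup_right),
          ⟨σ.1.comp (IntermediateField.inclusion le_sup_left), hτrange⟩⟩ with hpdef
      have hp := (hExt p).choose_spec
      apply algHom_ext_of_sup
      · intro x
        rw [hp.2.1 x]
        rfl
      · intro x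
        rw [hp.2.2 x]
        rfl
  calc Nat.card {σ : ↥(L ⊔ F) →ₐ[K] Kbar // σ.fieldRange ≤ M ⊔ F}
      = Nat.card ((↥F →ₐ[K] Kbar) × {τ : ↥L →ₐ[K] Kbar // τ.fieldRange ≤ M}) :=
        (Nat.card_congr (Equiv.ofBijective ext hbij)).symm
    _ = Nat.card (↥F →ₐ[K] Kbar) * Nat.card {τ : ↥L →ₐ[K] Kbar // τ.fieldRange ≤ M} :=
        Nat.card_prod _ _
    _ = Module.finrank K ↥F * Nat.card {τ : ↥L →ₐ[K] Kbar // τ.fieldRange ≤ M} := by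
        rw [Nat.card_eq_fintype_card, AlgHom.card]
end

section
/- Let L/K and M/K be finite extensions inside K̄, and let L̃ be the Galois closure of L/K. Then: (1) τ_K(L, L) = [L : K] and τ_K(L̃, L) = t_K(L); (2) t_K(L) divides τ_K(M, L); and (3) if τ_K(M, L) ≠ 0, then τ_K(M, L) divides [L : K]. -/
open IntermediateField Polynomial
open scoped Classical

open Module
open scoped Pointwise

/- ==== auxiliary lemmas ==== -/

theorem IF_mem_map {K L L' : Type*} [Field K] [Field L] [Field L'] [Algebra K L] [Algebra K L']
    {S : IntermediateField K L} {f : L →ₐ[K] L'} {y : L'} :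
    y ∈ S.map f ↔ ∃ x ∈ S, f x = y := Subalgebra.mem_map

theorem IF_mem_comap {K L L' : Type*} [Field K] [Field L] [Field L'] [Algebra K L] [Algebra K L']
    {S : IntermediateField K L'} {f : L →ₐ[K] L'} {x : L} :
    x ∈ S.comap f ↔ f x ∈ S := Iff.rfl

theorem IF_mem_sInf {K L : Type*} [Field K] [Field L] [Algebra K L]
    {S : Set (IntermediateField K L)} {x : L} :
    x ∈ sInf S ↔ ∀ p ∈ S, x ∈ p := by
  rw [← SetLike.mem_coe, IntermediateField.coe_sInf]
  simp

theorem aux_normalClosure_eq_iSup_conj {G : Type*} [Group G] (H : Subgroup G) :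
    Subgroup.normalClosure (H : Set G) = ⨆ σ : G, MulAut.conj σ • H := by
  have hn : (⨆ σ : G, MulAut.conj σ • H).Normal := by
    constructor
    intro n hn g
    have hle : ∀ σ : G, MulAut.conj σ • H ≤ ⨆ σ : G, MulAut.conj σ • H :=
      fun σ => le_iSup (fun σ : G => MulAut.conj σ • H) σ
    refine Subgroup.iSup_induction _ (C := fun x => g * x * g⁻¹ ∈ _) hn ?_ ?_ ?_
    · intro σ x hx
      refine hle (g * σ) ?_
      rw [Subgroup.mem_pointwise_smul_iff_inv_smul_mem] at hx ⊢
      simpa [mul_assoc] using hx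
    · simpa using (⨆ σ : G, MulAut.conj σ • H).one_mem
    · intro x y hx hy
      have := Subgroup.mul_mem _ hx hy
      simpa [mul_assoc] using this
  apply le_antisymm
  · exact Subgroup.normalClosure_le_normal
      ((le_iSup (fun σ : G => MulAut.conj σ • H) 1).trans_eq' (by simp))
  · refine iSup_le fun σ => ?_
    rintro x hx
    rw [Subgroup.mem_pointwise_smul_iff_inv_smul_mem] at hx
    have h1 : σ⁻¹ * x * σ ∈ Subgroup.normalClosure (H : Set G) :=
      Subgroup.subset_normalClosure (by simpa using hx)
    have := Subgroup.Normal.conj_mem inferInstance _ h1 σ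
    simpa [mul_assoc] using this

theorem IF_mem_fixedField_iff {K E : Type*} [Field K] [Field E] [Algebra K E]
    {H : Subgroup (E ≃ₐ[K] E)} {x : E} :
    x ∈ fixedField H ↔ ∀ g : H, g • x = x := Iff.rfl

theorem aux_fixedField_iSup {K E : Type*} [Field K] [Field E] [Algebra K E] {ι : Type*}
    (N : ι → Subgroup (E ≃ₐ[K] E)) :
    fixedField (⨆ i, N i) = ⨅ i, fixedField (N i) := by
  apply le_antisymm
  · refine le_iInf fun i => fun x hx => ?_
    rw [IF_mem_fixedField_iff]
    intro g
    exact (IF_mem_fixedField_iff.1 hx) (⟨g.1, (le_iSup N i) g.2⟩ : ↥(⨆ i, N i))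
  · intro x hx
    rw [IF_mem_fixedField_iff]
    intro g
    have h : ∀ g ∈ ⨆ i, N i, g • x = x := by
      intro g hg
      refine Subgroup.iSup_induction _ (C := fun g => g • x = x) hg ?_ ?_ ?_
      · intro i h hh
        exact IF_mem_fixedField_iff.1 ((iInf_le (fun i => fixedField (N i)) i) hx)
          (⟨h, hh⟩ : ↥(N i))
      · simp
      · intro a b ha hb
        rw [mul_smul, hb, ha]
    exact h g g.2

theorem aux_finrank_fixedField_eq_index {K E : Type*} [Field K] [Field E] [Algebra K E]
    [FiniteDimensional K E] [IsGalois K E] (N : Subgroup (E ≃ₐ[K] E)) :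
    finrank K (fixedField N) = N.index := by
  classical
  have h1 : finrank (fixedField N) E = Fintype.card N := by
    rw [finrank_fixedField_eq_card N]; convert Nat.card_eq_fintype_card
  have h2 : finrank K (fixedField N) * finrank (fixedField N) E = finrank K E :=
    finrank_mul_finrank _ _ _
  have h3 : finrank K E = Fintype.card (E ≃ₐ[K] E) := by
    rw [← IsGalois.card_aut_eq_finrank K E]; convert Nat.card_eq_fintype_card
  have h4 : N.index * Nat.card N = Nat.card (E ≃ₐ[K] E) := N.index_mul_card
  simp only [Nat.card_eq_fintype_card] at h4
  have hc : 0 < Fintype.card N := Fintype.card_pos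
  have h5 : finrank K (fixedField N) * Fintype.card N = N.index * Fintype.card N := by
    rw [← h1] at *; omega
  exact Nat.eq_of_mul_eq_mul_right hc h5

theorem aux_map_sInf {F E : Type*} [Field F] [Field E] [Algebra F E]
    (D : IntermediateField F E) (T : Set (IntermediateField F ↥D)) (hT : T.Nonempty) :
    (sInf T).map D.val = sInf ((fun t => t.map D.val) '' T) := by
  apply le_antisymm
  · refine le_sInf ?_
    rintro _ ⟨t, ht, rfl⟩
    exact IntermediateField.map_mono _ (sInf_le ht)
  · intro x hx
    obtain ⟨t₀, ht₀⟩ := hT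
    have hx₀ : x ∈ t₀.map D.val :=
      (sInf_le (Set.mem_image_of_mem (fun t => t.map D.val) ht₀)) hx
    obtain ⟨y, hy₀, rfl⟩ := IF_mem_map.1 hx₀
    refine IF_mem_map.2 ⟨y, ?_, rfl⟩
    refine IF_mem_sInf.2 fun t ht => ?_
    have hxt : D.val y ∈ t.map D.val :=
      (sInf_le (Set.mem_image_of_mem (fun t => t.map D.val) ht)) hx
    obtain ⟨y', hy', hyy⟩ := IF_mem_map.1 hxt
    have he : y' = y := Subtype.val_injective hyy
    exact he ▸ hy'

theorem aux_finrank_map_val {F E : Type*} [Field F] [Field E] [Algebra F E]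
    (D : IntermediateField F E) (t : IntermediateField F ↥D) :
    finrank F ↥(t.map D.val) = finrank F ↥t :=
  ((IntermediateField.equivMap t D.val).toLinearEquiv.finrank_eq).symm

section Main

variable {K Kbar : Type*} [Field K] [PerfectField K] [Field Kbar] [Algebra K Kbar]
    [IsAlgClosure K Kbar] (L : IntermediateField K Kbar) [FiniteDimensional K ↥L]

instance galClosure_normal : Normal K ↥(galClosure K L) :=
  inferInstanceAs (Normal K ↥(normalClosure K L Kbar))
instance galClosure_isGalois : IsGalois K ↥(galClosure K L) :=
  inferInstanceAs (IsGalois K ↥(normalClosure K L Kbar))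
instance galClosure_finiteDimensional : FiniteDimensional K ↥(galClosure K L) :=
  inferInstanceAs (FiniteDimensional K ↥(normalClosure K L Kbar))

theorem aux_map_le_galClosure (σ : Kbar ≃ₐ[K] Kbar) :
    L.map (σ : Kbar →ₐ[K] Kbar) ≤ galClosure K L := by
  show L.map (σ : Kbar →ₐ[K] Kbar) ≤ normalClosure K L Kbar
  rw [normalClosure_def'']
  exact le_iSup (fun f : Kbar ≃ₐ[K] Kbar => L.map (f : Kbar →ₐ[K] Kbar)) σ

theorem aux_exists_eq_map {L' : IntermediateField K Kbar} (χ : ↥L' ≃ₐ[K] ↥L) :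
    ∃ σ : Kbar ≃ₐ[K] Kbar, L' = L.map (σ : Kbar →ₐ[K] Kbar) := by
  refine ⟨(χ.liftNormal Kbar).symm, ?_⟩
  have h : L'.map ((χ.liftNormal Kbar : Kbar ≃ₐ[K] Kbar) : Kbar →ₐ[K] Kbar) = L := by
    ext x
    rw [IF_mem_map]
    constructor
    · rintro ⟨y, hy, rfl⟩
      have hc := χ.liftNormal_commutes Kbar (⟨y, hy⟩ : L')
      simp only [IntermediateField.algebraMap_apply] at hc
      show (χ.liftNormal Kbar) y ∈ L
      rw [hc]
      exact (χ ⟨y, hy⟩).2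
    · intro hx
      refine ⟨χ.symm ⟨x, hx⟩, (χ.symm ⟨x, hx⟩).2, ?_⟩
      have hc := χ.liftNormal_commutes Kbar (χ.symm ⟨x, hx⟩)
      simp only [IntermediateField.algebraMap_apply, AlgEquiv.apply_symm_apply] at hc
      show (χ.liftNormal Kbar) ↑(χ.symm ⟨x, hx⟩) = x
      exact hc
  have h2 : (L'.map ((χ.liftNormal Kbar : Kbar ≃ₐ[K] Kbar) : Kbar →ₐ[K] Kbar)).map
      (((χ.liftNormal Kbar).symm : Kbar ≃ₐ[K] Kbar) : Kbar →ₐ[K] Kbar) = L' := by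
    rw [IntermediateField.map_map]
    have h3 : (((χ.liftNormal Kbar).symm : Kbar ≃ₐ[K] Kbar) : Kbar →ₐ[K] Kbar).comp
        ((χ.liftNormal Kbar : Kbar ≃ₐ[K] Kbar) : Kbar →ₐ[K] Kbar) = AlgHom.id K Kbar := by
      ext z
      simp
    rw [h3, IntermediateField.map_id]
  conv_lhs => rw [← h2]
  rw [h]

theorem aux_le_galClosure {L' : IntermediateField K Kbar} (χ : ↥L' ≃ₐ[K] ↥L) :
    L' ≤ galClosure K L := by
  obtain ⟨σ, rfl⟩ := aux_exists_eq_map L χ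
  exact aux_map_le_galClosure L σ

theorem aux_S_eq_range :
    {L' : IntermediateField K Kbar | L' ≤ galClosure K L ∧ Nonempty (↥L' ≃ₐ[K] ↥L)}
      = Set.range (fun σ : Kbar ≃ₐ[K] Kbar => L.map (σ : Kbar →ₐ[K] Kbar)) := by
  ext L'
  constructor
  · rintro ⟨-, ⟨χ⟩⟩
    obtain ⟨σ, rfl⟩ := aux_exists_eq_map L χ
    exact ⟨σ, rfl⟩
  · rintro ⟨σ, rfl⟩
    exact ⟨aux_map_le_galClosure L σ,
      ⟨(IntermediateField.equivMap L (σ : Kbar →ₐ[K] Kbar)).symm⟩⟩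

theorem aux_map_val_conj (σ : Kbar ≃ₐ[K] Kbar) :
    ((IntermediateField.comap (galClosure K L).val L).map
        ((AlgEquiv.restrictNormalHom (↥(galClosure K L)) σ :
            ↥(galClosure K L) ≃ₐ[K] ↥(galClosure K L)) :
          ↥(galClosure K L) →ₐ[K] ↥(galClosure K L))).map (galClosure K L).val
      = L.map (σ : Kbar →ₐ[K] Kbar) := by
  have hLE : L ≤ galClosure K L := IntermediateField.le_normalClosure L
  set E := galClosure K L with hE
  ext x
  simp only [IF_mem_map]
  constructor
  · rintro ⟨y, ⟨z, hz, rfl⟩, rfl⟩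
    rw [IF_mem_comap] at hz
    refine ⟨E.val z, hz, ?_⟩
    exact (AlgEquiv.restrictNormalHom_apply (E) σ z).symm
  · rintro ⟨w, hw, rfl⟩
    have hwE : w ∈ E := hLE hw
    refine ⟨AlgEquiv.restrictNormalHom (↥E) σ ⟨w, hwE⟩,
      ⟨⟨w, hwE⟩, IF_mem_comap.2 (by simpa using hw), rfl⟩, ?_⟩
    exact AlgEquiv.restrictNormalHom_apply (E) σ ⟨w, hwE⟩

/-- KEY: τ_K(L̃, L) = t_K(L) -/
theorem aux_key : interIndicium K (galClosure K L) L = ascIndex K L := by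
  have hSne : {L' : IntermediateField K Kbar | L' ≤ galClosure K L ∧
      Nonempty (↥L' ≃ₐ[K] ↥L)}.Nonempty :=
    ⟨L, IntermediateField.le_normalClosure L, ⟨AlgEquiv.refl⟩⟩
  unfold interIndicium
  rw [if_pos hSne]
  set T := Set.range (fun g : ↥(galClosure K L) ≃ₐ[K] ↥(galClosure K L) =>
    (IntermediateField.comap (galClosure K L).val L).map
      (g : ↥(galClosure K L) →ₐ[K] ↥(galClosure K L))) with hT
  have him : {L' : IntermediateField K Kbar | L' ≤ galClosure K L ∧ Nonempty (↥L' ≃ₐ[K] ↥L)}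
      = (fun t : IntermediateField K ↥(galClosure K L) => t.map (galClosure K L).val) '' T := by
    rw [aux_S_eq_range]
    ext L'
    constructor
    · rintro ⟨σ, rfl⟩
      exact ⟨_, ⟨AlgEquiv.restrictNormalHom (↥(galClosure K L)) σ, rfl⟩, aux_map_val_conj L σ⟩
    · rintro ⟨t, ⟨g, rfl⟩, rfl⟩
      obtain ⟨σ, hσ⟩ := AlgEquiv.restrictNormalHom_surjective
        (K₁ := ↥(galClosure K L)) (E := Kbar) g
      refine ⟨σ, ?_⟩
      show L.map (σ : Kbar →ₐ[K] Kbar)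
        = ((IntermediateField.comap (galClosure K L).val L).map
            (g : ↥(galClosure K L) →ₐ[K] ↥(galClosure K L))).map (galClosure K L).val
      rw [← hσ]
      exact (aux_map_val_conj L σ).symm
  have hTne : T.Nonempty := ⟨_, ⟨1, rfl⟩⟩
  rw [him, ← aux_map_sInf (galClosure K L) T hTne, aux_finrank_map_val]
  have hinf : sInf T = fixedField (fixSubCl K L) := by
    rw [hT, sInf_range]
    have h1 : ∀ g : ↥(galClosure K L) ≃ₐ[K] ↥(galClosure K L),
        (IntermediateField.comap (galClosure K L).val L).map
            (g : ↥(galClosure K L) →ₐ[K] ↥(galClosure K L))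
          = fixedField (MulAut.conj g • fixSub K L) := by
      intro g
      rw [show MulAut.conj g • fixSub K L
          = ((IntermediateField.comap (galClosure K L).val L).map
              (g : ↥(galClosure K L) →ₐ[K] ↥(galClosure K L))).fixingSubgroup from
        (IsGalois.map_fixingSubgroup _ g).symm]
      rw [IsGalois.fixedField_fixingSubgroup]
    simp_rw [h1]
    rw [← aux_fixedField_iSup]
    unfold fixSubCl
    rw [aux_normalClosure_eq_iSup_conj]
  rw [hinf, aux_finrank_fixedField_eq_index]
  rfl

end Main

/-- (1) `τ_K(L,L) = [L:K]` and `τ_K(L̃,L) = t_K(L)`; (2) `t_K(L) ∣ τ_K(M,L)`;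
(3) if `τ_K(M,L) ≠ 0` then `τ_K(M,L) ∣ [L:K]`. -/
theorem statement5 {K Kbar : Type*} [Field K] [PerfectField K] [Field Kbar] [Algebra K Kbar]
    [IsAlgClosure K Kbar] (L M : IntermediateField K Kbar)
    [FiniteDimensional K ↥L] [FiniteDimensional K ↥M] :
    (interIndicium K L L = Module.finrank K ↥L ∧
      interIndicium K (galClosure K L) L = ascIndex K L) ∧
    ascIndex K L ∣ interIndicium K M L ∧
    (interIndicium K M L ≠ 0 → interIndicium K M L ∣ Module.finrank K ↥L) := by
  have p1a : interIndicium K L L = Module.finrank K ↥L := by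
    have hset : {L' : IntermediateField K Kbar | L' ≤ L ∧ Nonempty (↥L' ≃ₐ[K] ↥L)} = {L} := by
      ext L'
      simp only [Set.mem_setOf_eq, Set.mem_singleton_iff]
      constructor
      · rintro ⟨hle, ⟨χ⟩⟩
        haveI : FiniteDimensional K ↥L' := LinearEquiv.finiteDimensional χ.symm.toLinearEquiv
        exact IntermediateField.eq_of_le_of_finrank_eq hle χ.toLinearEquiv.finrank_eq
      · rintro rfl
        exact ⟨le_rfl, ⟨AlgEquiv.refl⟩⟩
    unfold interIndicium
    rw [hset, if_pos (Set.singleton_nonempty L), sInf_singleton]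
  have hE : ∀ L' : IntermediateField K Kbar, Nonempty (↥L' ≃ₐ[K] ↥L) → L' ≤ galClosure K L :=
    fun L' h => aux_le_galClosure L h.some
  have hEq : ascIndex K L = Module.finrank K
      ↥(sInf {L' : IntermediateField K Kbar |
          L' ≤ galClosure K L ∧ Nonempty (↥L' ≃ₐ[K] ↥L)}) := by
    rw [← aux_key L]
    unfold interIndicium
    rw [if_pos ⟨L, IntermediateField.le_normalClosure L, ⟨AlgEquiv.refl⟩⟩]
  have p2 : ascIndex K L ∣ interIndicium K M L := by
    by_cases hne : {L' : IntermediateField K Kbar | L' ≤ M ∧ Nonempty (↥L' ≃ₐ[K] ↥L)}.Nonempty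
    · unfold interIndicium
      rw [if_pos hne]
      have hsub : {L' : IntermediateField K Kbar | L' ≤ M ∧ Nonempty (↥L' ≃ₐ[K] ↥L)}
          ⊆ {L' : IntermediateField K Kbar | L' ≤ galClosure K L ∧ Nonempty (↥L' ≃ₐ[K] ↥L)} :=
        fun L' h => ⟨hE L' h.2, h.2⟩
      have hle : sInf {L' : IntermediateField K Kbar |
            L' ≤ galClosure K L ∧ Nonempty (↥L' ≃ₐ[K] ↥L)}
          ≤ sInf {L' : IntermediateField K Kbar | L' ≤ M ∧ Nonempty (↥L' ≃ₐ[K] ↥L)} :=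
        sInf_le_sInf hsub
      rw [hEq]
      exact ⟨_, (IntermediateField.finrank_bot_mul_relfinrank hle).symm⟩
    · unfold interIndicium
      rw [if_neg hne]
      exact dvd_zero _
  have p3 : interIndicium K M L ≠ 0 → interIndicium K M L ∣ Module.finrank K ↥L := by
    intro hτ
    by_cases hne : {L' : IntermediateField K Kbar | L' ≤ M ∧ Nonempty (↥L' ≃ₐ[K] ↥L)}.Nonempty
    · obtain ⟨L', hle', ⟨χ⟩⟩ := hne
      have h1 : sInf {L'' : IntermediateField K Kbar |
          L'' ≤ M ∧ Nonempty (↥L'' ≃ₐ[K] ↥L)} ≤ L' := sInf_le ⟨hle', ⟨χ⟩⟩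
      unfold interIndicium
      rw [if_pos ⟨L', hle', ⟨χ⟩⟩]
      have h2 : Module.finrank K ↥(sInf {L'' : IntermediateField K Kbar |
            L'' ≤ M ∧ Nonempty (↥L'' ≃ₐ[K] ↥L)}) ∣ Module.finrank K ↥L' :=
        ⟨_, (IntermediateField.finrank_bot_mul_relfinrank h1).symm⟩
      rwa [χ.toLinearEquiv.finrank_eq] at h2
    · exfalso
      apply hτ
      unfold interIndicium
      rw [if_neg hne]
  exact ⟨⟨p1a, aux_key L⟩, p2, p3⟩
end
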